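/- arXiv:2002.07095 — 8 statements merged into one kernel-verified Lean document; each statement's English description precedes it below -/
import Mathlib

section
/- Let b and ℓ be natural numbers with ℓ ≤ b. For all natural numbers x, y with x + y = ℓ and x ≤ y, one has C(b,x)·C(b,y) ≤ C(b,⌊ℓ/2⌋)·C(b,⌈ℓ/2⌉); that is, among all pairs (x,y) with x+y=ℓ and 0 ≤ x ≤ y, the product C(b,x)·C(b,y) is maximized at (x,y) = (⌊ℓ/2⌋,⌈ℓ/2⌉). Consequently, for fixed n, the quantity P(x,y) = C(b,x)·C(b,y)/C(n+1,ℓ) is maximized at the same pair. -/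
/-!
Moving one unit from the larger index to the smaller one never decreases `C(b,x) · C(b,y)`:
for `x ≤ z`, multiplying `C(b,x) · C(b,z+1) ≤ C(b,x+1) · C(b,z)` by `(x+1)(z+1)` and using
`C(b,k+1) · (k+1) = C(b,k) · (b-k)` reduces it to `(b-z)(x+1) ≤ (b-x)(z+1)`.
Hence `i ↦ C(b,i) · C(b,ℓ-i)` is monotone on `[0, ⌊ℓ/2⌋]`.
-/

namespace Nat

theorem choose_mul_choose_succ_le {b x z : ℕ} (h : x ≤ z) :
    b.choose x * b.choose (z + 1) ≤ b.choose (x + 1) * b.choose z := by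
  have key : (b - z) * (x + 1) ≤ (b - x) * (z + 1) := Nat.mul_le_mul (by omega) (by omega)
  refine Nat.le_of_mul_le_mul_right (c := (x + 1) * (z + 1)) ?_ (by positivity)
  calc b.choose x * b.choose (z + 1) * ((x + 1) * (z + 1))
      = b.choose x * (b.choose (z + 1) * (z + 1)) * (x + 1) := by ring
    _ = b.choose x * b.choose z * ((b - z) * (x + 1)) := by rw [choose_succ_right_eq]; ring
    _ ≤ b.choose x * b.choose z * ((b - x) * (z + 1)) := Nat.mul_le_mul_left _ key
    _ = b.choose x * (b - x) * b.choose z * (z + 1) := by ring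
    _ = b.choose (x + 1) * b.choose z * ((x + 1) * (z + 1)) := by
        rw [← choose_succ_right_eq]; ring

theorem monotoneOn_choose_mul_choose_sub (b ℓ : ℕ) :
    MonotoneOn (fun i ↦ b.choose i * b.choose (ℓ - i)) (Set.Iic (ℓ / 2)) := by
  refine monotoneOn_of_le_succ Set.ordConnected_Iic fun i _ _ hi ↦ ?_
  rw [Order.succ_eq_add_one, Set.mem_Iic] at *
  have hsub : ℓ - i = ℓ - (i + 1) + 1 := by omega
  rw [hsub]
  exact choose_mul_choose_succ_le (by omega)

end Nat

theorem choose_mul_choose_max_at_half_general (b ℓ : ℕ) :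
    (∀ x y : ℕ, x + y = ℓ → x ≤ y →
        Nat.choose b x * Nat.choose b y ≤
          Nat.choose b (ℓ / 2) * Nat.choose b ((ℓ + 1) / 2)) ∧
    (∀ n : ℕ, ∀ x y : ℕ, x + y = ℓ → x ≤ y →
        (Nat.choose b x * Nat.choose b y : ℚ) / (Nat.choose (n + 1) ℓ : ℚ) ≤
          (Nat.choose b (ℓ / 2) * Nat.choose b ((ℓ + 1) / 2) : ℚ) /
            (Nat.choose (n + 1) ℓ : ℚ)) := by
  have hmax : ∀ x y : ℕ, x + y = ℓ → x ≤ y →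
      b.choose x * b.choose y ≤ b.choose (ℓ / 2) * b.choose ((ℓ + 1) / 2) := by
    intro x y hxy hle
    obtain rfl : y = ℓ - x := by omega
    rw [show (ℓ + 1) / 2 = ℓ - ℓ / 2 by omega]
    exact Nat.monotoneOn_choose_mul_choose_sub b ℓ (by simp; omega) (by simp) (by omega)
  refine ⟨hmax, fun n x y hxy hle ↦ ?_⟩
  exact div_le_div_of_nonneg_right (by exact_mod_cast hmax x y hxy hle) (Nat.cast_nonneg _)

theorem choose_mul_choose_max_at_half (b ℓ : ℕ) (hℓ : ℓ ≤ b) :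
    (∀ x y : ℕ, x + y = ℓ → x ≤ y →
        Nat.choose b x * Nat.choose b y ≤
          Nat.choose b (ℓ / 2) * Nat.choose b ((ℓ + 1) / 2)) ∧
    (∀ n : ℕ, ∀ x y : ℕ, x + y = ℓ → x ≤ y →
        (Nat.choose b x * Nat.choose b y : ℚ) / (Nat.choose (n + 1) ℓ : ℚ) ≤
          (Nat.choose b (ℓ / 2) * Nat.choose b ((ℓ + 1) / 2) : ℚ) /
            (Nat.choose (n + 1) ℓ : ℚ)) :=
  choose_mul_choose_max_at_half_general b ℓ
end

section
/- Let N, b, h₁, h₂ be natural numbers with h₁ ≤ b, h₂ ≤ b and 2b ≤ N, and set ℓ = h₁ + h₂. Fix a subset J of a set of size N with |J| = ℓ. Let Ω be the set of ordered pairs (I₁, I₂) of disjoint subsets of the N-element set with |I₁| = |I₂| = b, and let F be the set of pairs (I₁,I₂) ∈ Ω such that |J ∩ I₁| = h₁ and |J ∩ I₂| = h₂. Then |F| · C(N,ℓ) = C(b,h₁) · C(b,h₂) · |Ω|. (Equivalently, the probability that a uniformly random pair of disjoint b-subsets splits the fixed ℓ-set J as (h₁,h₂) equals C(b,h₁)C(b,h₂)/C(N,ℓ).)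 -/
/-!
Choose `I₁` first: it takes `h₁` points of `J` and `b - h₁` points outside `J`, and then `I₂`
must take the remaining `h₂` points of `J` together with `b - h₂` of the `N - b - h₂` points
outside `I₁ ∪ J`. Hence `|F| = C(ℓ,h₁) C(N-ℓ,b-h₁) C(N-b-h₂,b-h₂)`, while
`|Ω| = C(N,b) C(N-b,b)`, and both sides of the claim are factorisations of the multinomial
coefficient `N! / (h₁! h₂! (b-h₁)! (b-h₂)! (N-2b)!)`.
-/

open Finset

namespace Finset

variable {α : Type*} [DecidableEq α]

theorem card_filter_powerset_card_inter (S J : Finset α) {b h : ℕ} (hhb : h ≤ b) :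
    #{I ∈ S.powerset | #I = b ∧ #(J ∩ I) = h} =
      (#(S ∩ J)).choose h * (#(S \ J)).choose (b - h) := by
  rw [← card_powersetCard, ← card_powersetCard, ← card_product]
  refine card_nbij' (fun I => (I ∩ J, I \ J)) (fun P => P.1 ∪ P.2) ?_ ?_ ?_ ?_
  · intro I hI
    simp only [mem_coe, mem_filter, mem_powerset] at hI
    obtain ⟨hIS, hIb, hIJ⟩ := hI
    rw [inter_comm] at hIJ
    have := card_inter_add_card_sdiff I J
    simp only [mem_coe, mem_product, mem_powersetCard]
    exact ⟨⟨inter_subset_inter_right hIS, hIJ⟩, sdiff_subset_sdiff hIS le_rfl, by omega⟩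
  · rintro ⟨A, B⟩ hP
    simp only [mem_coe, mem_product, mem_powersetCard, subset_inter_iff, subset_sdiff] at hP
    obtain ⟨⟨⟨hAS, hAJ⟩, hA⟩, ⟨hBS, hBJ⟩, hB⟩ := hP
    simp only [mem_coe, mem_filter, mem_powerset]
    refine ⟨union_subset hAS hBS, ?_, ?_⟩
    · rw [card_union_of_disjoint (hBJ.symm.mono_left hAJ)]
      omega
    · rw [inter_union_distrib_left, inter_eq_right.mpr hAJ,
        disjoint_iff_inter_eq_empty.mp hBJ.symm, union_empty, hA]
  · intro I _
    exact sup_inf_sdiff I J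
  · rintro ⟨A, B⟩ hP
    simp only [mem_coe, mem_product, mem_powersetCard, subset_inter_iff, subset_sdiff] at hP
    obtain ⟨⟨⟨-, hAJ⟩, -⟩, ⟨-, hBJ⟩, -⟩ := hP
    simp only [Prod.mk.injEq]
    constructor
    · rw [union_inter_distrib_right, inter_eq_left.mpr hAJ,
        disjoint_iff_inter_eq_empty.mp hBJ, union_empty]
    · rw [union_sdiff_distrib, sdiff_eq_empty_iff_subset.mpr hAJ, hBJ.sdiff_eq_left, empty_union]

theorem card_filter_powerset_sdiff_card_inter {S J I : Finset α} (hJ : J ⊆ S) (hI : I ⊆ S)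
    {b h₁ h₂ : ℕ} (hh₂ : h₂ ≤ b) (hIb : #I = b) (hIJ : #(J ∩ I) = h₁) (hJcard : #J = h₁ + h₂) :
    #{I' ∈ (S \ I).powerset | #I' = b ∧ #(J ∩ I') = h₂} = (#S - b - h₂).choose (b - h₂) := by
  have hJI := card_inter_add_card_sdiff J I
  have hIJ' := card_union_add_card_inter I J
  rw [inter_comm] at hIJ'
  have hin : #((S \ I) ∩ J) = h₂ := by
    rw [sdiff_inter_right_comm, inter_eq_right.mpr hJ]
    omega
  have hout : #((S \ I) \ J) = #S - b - h₂ := by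
    rw [sdiff_sdiff_left, sup_eq_union, card_sdiff_of_subset (union_subset hI hJ)]
    omega
  rw [card_filter_powerset_card_inter _ _ hh₂, hin, hout, Nat.choose_self, one_mul]

theorem card_filter_disjoint_powerset_product (S : Finset α) (p q : Finset α → Prop)
    [DecidablePred p] [DecidablePred q] {c : ℕ}
    (hc : ∀ I ⊆ S, p I → #{I' ∈ (S \ I).powerset | q I'} = c) :
    #{P ∈ S.powerset ×ˢ S.powerset | Disjoint P.1 P.2 ∧ p P.1 ∧ q P.2} =
      #{I ∈ S.powerset | p I} * c := by
  rw [card_eq_sum_card_fiberwise (f := Prod.fst) (t := {I ∈ S.powerset | p I})]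
  · refine sum_const_nat fun I hI => ?_
    rw [mem_filter, mem_powerset] at hI
    rw [← hc I hI.1 hI.2]
    refine card_nbij' Prod.snd (fun I' => (I, I')) ?_ ?_ ?_ ?_
    · rintro ⟨I₁, I₂⟩ hP
      simp only [mem_coe, mem_filter, mem_product, mem_powerset, subset_sdiff] at hP ⊢
      obtain ⟨⟨⟨-, hI₂⟩, hdisj, -, hq⟩, rfl⟩ := hP
      exact ⟨⟨hI₂, hdisj.symm⟩, hq⟩
    · intro I' hI'
      simp only [mem_coe, mem_filter, mem_product, mem_powerset, subset_sdiff] at hI' ⊢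
      exact ⟨⟨⟨hI.1, hI'.1.1⟩, hI'.1.2.symm, hI.2, hI'.2⟩, trivial⟩
    · rintro ⟨I₁, I₂⟩ hP
      simp only [mem_coe, mem_filter] at hP
      rw [← hP.2]
    · intro I' _
      rfl
  · intro P hP
    simp only [mem_coe, mem_filter, mem_product] at hP ⊢
    exact ⟨hP.1.1, hP.2.2.1⟩

end Finset

namespace Nat

theorem choose_mul_choose_sub_mul_factorial {n a c : ℕ} (h : a + c ≤ n) :
    n.choose a * (n - a).choose c * (a ! * c ! * (n - a - c)!) = n ! :=
  calc _ = n.choose a * a ! * ((n - a).choose c * c ! * (n - a - c)!) := by ring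
    _ = n ! := by
      rw [choose_mul_factorial_mul_factorial (n := n - a) (by omega),
        choose_mul_factorial_mul_factorial (by omega)]

theorem choose_split_mul_choose {N b h₁ h₂ : ℕ} (hh₁ : h₁ ≤ b) (hh₂ : h₂ ≤ b)
    (hbN : 2 * b ≤ N) :
    (h₁ + h₂).choose h₁ * (N - (h₁ + h₂)).choose (b - h₁) * (N - b - h₂).choose (b - h₂) *
        N.choose (h₁ + h₂) =
      b.choose h₁ * b.choose h₂ * (N.choose b * (N - b).choose b) := by
  have hrest := choose_mul_choose_sub_mul_factorial (n := N - (h₁ + h₂)) (a := b - h₁)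
    (c := b - h₂) (by omega)
  rw [show N - (h₁ + h₂) - (b - h₁) = N - b - h₂ by omega,
    show N - b - h₂ - (b - h₂) = N - 2 * b by omega] at hrest
  have hblocks := choose_mul_choose_sub_mul_factorial (n := N) (a := b) (c := b) (by omega)
  rw [show N - b - b = N - 2 * b by omega] at hblocks
  refine Nat.eq_of_mul_eq_mul_right
    (m := h₁ ! * h₂ ! * ((b - h₁)! * (b - h₂)! * (N - 2 * b)!)) (by positivity) ?_
  calc _ = N.choose (h₁ + h₂) * ((h₁ + h₂).choose h₁ * h₁ ! * h₂ !) *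
        ((N - (h₁ + h₂)).choose (b - h₁) * (N - b - h₂).choose (b - h₂) *
          ((b - h₁)! * (b - h₂)! * (N - 2 * b)!)) := by ring
    _ = N ! := by
      rw [choose_symm_add, add_choose_mul_factorial_mul_factorial, hrest,
        choose_mul_factorial_mul_factorial (by omega)]
    _ = N.choose b * (N - b).choose b *
        ((b.choose h₁ * h₁ ! * (b - h₁)!) * (b.choose h₂ * h₂ ! * (b - h₂)!) * (N - 2 * b)!) := by
      rw [choose_mul_factorial_mul_factorial hh₁, choose_mul_factorial_mul_factorial hh₂,
        hblocks]
    _ = _ := by ring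

end Nat

open Finset in
theorem split_probability_hypergeometric
    (N b h₁ h₂ : ℕ) (hh₁ : h₁ ≤ b) (hh₂ : h₂ ≤ b) (hbN : 2 * b ≤ N)
    (J : Finset ℕ) (hJ : J ⊆ Finset.range N) (hJcard : J.card = h₁ + h₂) :
    ((((Finset.range N).powerset ×ˢ (Finset.range N).powerset).filter
        (fun P : Finset ℕ × Finset ℕ =>
          Disjoint P.1 P.2 ∧ P.1.card = b ∧ P.2.card = b ∧
            (J ∩ P.1).card = h₁ ∧ (J ∩ P.2).card = h₂)).card *
      Nat.choose N (h₁ + h₂)) =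
    Nat.choose b h₁ * Nat.choose b h₂ *
      (((Finset.range N).powerset ×ˢ (Finset.range N).powerset).filter
        (fun P : Finset ℕ × Finset ℕ =>
          Disjoint P.1 P.2 ∧ P.1.card = b ∧ P.2.card = b)).card := by
  have hΩ := card_filter_disjoint_powerset_product (range N) (#· = b) (#· = b)
    (c := (N - b).choose b) fun I hI hIb => by
      rw [← powersetCard_eq_filter, card_powersetCard, card_sdiff_of_subset hI, card_range, hIb]
  rw [← powersetCard_eq_filter, card_powersetCard, card_range] at hΩ
  have hF := card_filter_disjoint_powerset_product (range N)
    (fun I => #I = b ∧ #(J ∩ I) = h₁) (fun I => #I = b ∧ #(J ∩ I) = h₂)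
    (c := (N - b - h₂).choose (b - h₂)) fun I hI ⟨hIb, hIJ⟩ => by
      rw [card_filter_powerset_sdiff_card_inter hJ hI hh₂ hIb hIJ hJcard, card_range]
  rw [card_filter_powerset_card_inter _ _ hh₁, inter_eq_right.mpr hJ,
    card_sdiff_of_subset hJ, card_range, hJcard] at hF
  simp only [and_assoc, _root_.and_left_comm] at hF
  rw [hF, hΩ]
  exact Nat.choose_split_mul_choose hh₁ hh₂ hbN
end

section
/- (Korselt's criterion) Let n be a composite natural number (n ≥ 2 and n is not prime). Then n is a Carmichael number, i.e. a^(n−1) ≡ 1 (mod n) for every integer a coprime to n, if and only if n is squarefree and for every prime p dividing n one has (p−1) ∣ (n−1). -/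
/-!
The condition on `n` says exactly that the Carmichael function `λ n`, the exponent of
`(ZMod n)ˣ`, divides `n - 1`. A square factor `p ^ 2 ∣ n` would give
`p ∣ λ (p ^ 2) ∣ λ n ∣ n - 1`, impossible since `p ∣ n`. For squarefree `n` the Chinese
remainder theorem gives `λ n = lcm {p - 1 | p ∣ n}`.
-/

namespace ArithmeticFunction

theorem carmichael_prime {p : ℕ} (hp : p.Prime) : carmichael p = p - 1 := by
  have : Fact p.Prime := ⟨hp⟩
  rw [carmichael_eq_exponent hp.ne_zero, IsCyclic.exponent_eq_card, Nat.card_eq_fintype_card,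
    ZMod.card_units_eq_totient, Nat.totient_prime hp]

theorem dvd_carmichael_sq {p : ℕ} (hp : p.Prime) : p ∣ carmichael (p ^ 2) := by
  obtain rfl | hp2 := eq_or_ne p 2
  · exact ⟨1, by rw [carmichael_two_pow_of_le_two le_rfl]; rfl⟩
  · rw [carmichael_pow_of_prime_ne_two 2 hp hp2, Nat.totient_prime_pow hp two_pos]
    exact (dvd_pow_self p one_ne_zero).mul_right _

theorem squarefree_of_coprime_carmichael {n : ℕ} (h : n.Coprime (carmichael n)) :
    Squarefree n := by
  rw [Nat.squarefree_iff_prime_squarefree]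
  intro p hp hpn
  have hpc : p ∣ carmichael n :=
    (dvd_carmichael_sq hp).trans (carmichael_dvd (by rwa [sq] : p ^ 2 ∣ n))
  exact hp.ne_one (Nat.eq_one_of_dvd_coprimes h (dvd_of_mul_left_dvd hpn) hpc)

theorem carmichael_of_squarefree {n : ℕ} (hn : Squarefree n) :
    carmichael n = n.primeFactors.lcm (· - 1) := by
  have : NeZero n := ⟨hn.ne_zero⟩
  rw [carmichael_factorization n]
  refine Finset.lcm_congr rfl fun p hp => ?_
  have hpp := Nat.prime_of_mem_primeFactors hp
  rw [Nat.factorization_eq_one_of_squarefree hn hpp (Nat.dvd_of_mem_primeFactors hp), pow_one,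
    carmichael_prime hpp]

theorem carmichael_dvd_iff_forall_pow_modEq_one {n k : ℕ} (hn : n ≠ 0) :
    carmichael n ∣ k ↔ ∀ a : ℤ, IsCoprime a n → a ^ k ≡ 1 [ZMOD n] := by
  rw [carmichael_eq_exponent hn, Monoid.exponent_dvd_iff_forall_pow_eq_one]
  constructor
  · intro h a ha
    rw [← ZMod.intCast_eq_intCast_iff]
    simpa using congr_arg Units.val (h (ZMod.unitOfIsCoprime a ha))
  · intro h u
    obtain ⟨a, ha⟩ := ZMod.intCast_surjective (u : ZMod n)
    have hcop : IsCoprime a n :=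
      isCoprime_comm.mp ((ZMod.coe_int_isUnit_iff_isCoprime a n).mp (ha ▸ u.isUnit))
    have hpow : (a : ZMod n) ^ k = 1 := by
      exact_mod_cast (ZMod.intCast_eq_intCast_iff _ _ _).mpr (h a hcop)
    ext
    rw [Units.val_pow_eq_pow_val, ← ha, hpow, Units.val_one]

end ArithmeticFunction

open ArithmeticFunction

theorem korselt_criterion_general (n : ℕ) (hn : 2 ≤ n) :
    (∀ a : ℤ, IsCoprime a (n : ℤ) → a ^ (n - 1) ≡ 1 [ZMOD (n : ℤ)]) ↔
      (Squarefree n ∧ ∀ p : ℕ, p.Prime → p ∣ n → (p - 1) ∣ (n - 1)) := by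
  rw [← carmichael_dvd_iff_forall_pow_modEq_one (by omega)]
  constructor
  · intro h
    have hcop : n.Coprime (carmichael n) :=
      ((Nat.coprime_self_sub_right (by omega)).mpr (Nat.coprime_one_right n)).coprime_dvd_right h
    exact ⟨squarefree_of_coprime_carmichael hcop,
      fun p hp hpn => carmichael_prime hp ▸ (carmichael_dvd hpn).trans h⟩
  · rintro ⟨hsf, h⟩
    rw [carmichael_of_squarefree hsf, Finset.lcm_dvd_iff]
    exact fun p hp => h p (Nat.prime_of_mem_primeFactors hp) (Nat.dvd_of_mem_primeFactors hp)

theorem korselt_criterion (n : ℕ) (hn : 2 ≤ n) (hcomp : ¬ n.Prime) :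
    (∀ a : ℤ, IsCoprime a (n : ℤ) → a ^ (n - 1) ≡ 1 [ZMOD (n : ℤ)]) ↔
      (Squarefree n ∧ ∀ p : ℕ, p.Prime → p ∣ n → (p - 1) ∣ (n - 1)) :=
  korselt_criterion_general n hn
end

section
/- Every Carmichael number is squarefree: if n is a composite natural number such that a^(n−1) ≡ 1 (mod n) for every integer a coprime to n, then n is squarefree. -/
/-!
If `p ^ 2 ∣ n`, put `m = n / p`; then `n ∣ m ^ 2`, so `1 + m` is a unit modulo `n` and the
binomial theorem gives `(1 + m) ^ (n - 1) ≡ 1 + (n - 1) m [ZMOD n]`. The Fermat condition then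
forces `p m ∣ (n - 1) m`, i.e. `p ∣ n - 1`, which is impossible since `p ∣ n`.
-/

theorem IsCoprime.one_add_of_dvd_sq {R : Type*} [CommRing R] {n x : R} (h : n ∣ x ^ 2) :
    IsCoprime (1 + x) n :=
  IsCoprime.of_isCoprime_of_dvd_right (IsCoprime.pow_right ⟨1, -1, by ring⟩) h

theorem dvd_natCast_mul_of_dvd_one_add_pow_sub_one {R : Type*} [CommRing R] {n x : R} (N : ℕ)
    (h : n ∣ x ^ 2) (hpow : n ∣ (1 + x) ^ N - 1) : n ∣ N * x := by
  have hbinom : n ∣ (1 + x) ^ N - x * N - 1 := by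
    simpa using h.trans (sq_dvd_add_pow_sub_sub x 1 N)
  have hdiff : (N : R) * x = ((1 + x) ^ N - 1) - ((1 + x) ^ N - x * N - 1) := by ring
  rw [hdiff]
  exact dvd_sub hpow hbinom

theorem carmichael_squarefree_general (n : ℕ) (hn : 2 ≤ n)
    (hcar : ∀ a : ℤ, IsCoprime a (n : ℤ) → a ^ (n - 1) ≡ 1 [ZMOD (n : ℤ)]) :
    Squarefree n := by
  rw [Nat.squarefree_iff_prime_squarefree]
  rintro p hp ⟨k, rfl⟩
  have hk : k ≠ 0 := by rintro rfl; omega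
  have hsq : ((p * p * k : ℕ) : ℤ) ∣ ((p * k : ℕ) : ℤ) ^ 2 := ⟨k, by push_cast; ring⟩
  have hpow := (hcar _ (IsCoprime.one_add_of_dvd_sq hsq)).symm.dvd
  have hdvd : p * (p * k) ∣ (p * p * k - 1) * (p * k) := by
    rw [← mul_assoc]
    exact_mod_cast dvd_natCast_mul_of_dvd_one_add_pow_sub_one _ hsq hpow
  have hpred : p ∣ p * p * k - 1 :=
    Nat.dvd_of_mul_dvd_mul_right (Nat.mul_pos hp.pos (Nat.pos_of_ne_zero hk)) hdvd
  have hone : p ∣ 1 := by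
    simpa [Nat.sub_sub_self (by omega : 1 ≤ p * p * k)] using
      Nat.dvd_sub (dvd_mul_of_dvd_left (dvd_mul_right p p) k) hpred
  exact hp.not_dvd_one hone

theorem carmichael_squarefree (n : ℕ) (hn : 2 ≤ n) (hcomp : ¬ n.Prime)
    (hcar : ∀ a : ℤ, IsCoprime a (n : ℤ) → a ^ (n - 1) ≡ 1 [ZMOD (n : ℤ)]) :
    Squarefree n :=
  carmichael_squarefree_general n hn hcar
end

section
/- (Correctness of the Erdős construction, step 5 of Algorithm 3) Let Λ be a positive integer and let S be a finite set of prime numbers such that for every p ∈ S, (p−1) divides Λ and p does not divide Λ. If |S| ≥ 2 and ∏_{p∈S} p ≡ 1 (mod Λ), then N = ∏_{p∈S} p is a Carmichael number, i.e. N is composite and a^(N−1) ≡ 1 (mod N) for every integer a coprime to N. -/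
/-!
Korselt's criterion: if `a` is coprime to `p` then `a ^ (p - 1) ≡ 1 [ZMOD p]` by Fermat, so
`a ^ e ≡ 1` modulo every prime `p ∈ S` as soon as `p - 1 ∣ e`, and hence modulo the squarefree
product `N = ∏ p ∈ S, p`. Here `N ≡ 1 [MOD Λ]` and `p - 1 ∣ Λ` give `p - 1 ∣ N - 1`.
Compositeness comes from `N` having at least two prime factors.
-/

theorem Int.pow_modEq_one_of_prime_of_sub_one_dvd {p e : ℕ} {a : ℤ} (hp : p.Prime)
    (hpe : p - 1 ∣ e) (ha : IsCoprime a p) : a ^ e ≡ 1 [ZMOD p] := by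
  obtain ⟨k, rfl⟩ := hpe
  simpa only [pow_mul, one_pow] using (Int.ModEq.pow_card_sub_one_eq_one hp ha).pow k

theorem Int.pow_modEq_one_of_prod_primes {S : Finset ℕ} {e : ℕ} {a : ℤ}
    (hprime : ∀ p ∈ S, p.Prime) (hdvd : ∀ p ∈ S, p - 1 ∣ e)
    (ha : IsCoprime a ((∏ p ∈ S, p : ℕ) : ℤ)) :
    a ^ e ≡ 1 [ZMOD ((∏ p ∈ S, p : ℕ) : ℤ)] := by
  have hcop : (S : Set ℕ).Pairwise (Function.onFun IsCoprime fun p : ℕ ↦ (p : ℤ)) :=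
    fun p hp q hq hpq ↦
      Nat.isCoprime_iff_coprime.2 ((Nat.coprime_primes (hprime p hp) (hprime q hq)).2 hpq)
  have hmodp : ∀ p ∈ S, (p : ℤ) ∣ a ^ e - 1 := fun p hp ↦
    have hpa : IsCoprime a p :=
      ha.of_isCoprime_of_dvd_right (Int.natCast_dvd_natCast.2 (Finset.dvd_prod_of_mem id hp))
    (Int.pow_modEq_one_of_prime_of_sub_one_dvd (hprime p hp) (hdvd p hp) hpa).symm.dvd
  rw [Nat.cast_prod]
  exact (Int.modEq_iff_dvd.2 (Finset.prod_dvd_of_coprime hcop hmodp)).symm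

theorem Finset.exists_prod_eq_mul_of_one_lt_card {S : Finset ℕ} (hS : ∀ p ∈ S, 2 ≤ p)
    (hcard : 1 < S.card) : ∃ m n, 2 ≤ m ∧ 2 ≤ n ∧ ∏ p ∈ S, p = m * n := by
  obtain ⟨p, hp, q, hq, hpq⟩ := Finset.one_lt_card.1 hcard
  have hq' : q ∈ S.erase p := Finset.mem_erase.2 ⟨hpq.symm, hq⟩
  have hpos : 0 < ∏ r ∈ S.erase p, r :=
    Finset.prod_pos fun r hr ↦ by have := hS r (Finset.mem_of_mem_erase hr); omega
  refine ⟨p, ∏ r ∈ S.erase p, r, hS p hp, ?_, (Finset.mul_prod_erase S id hp).symm⟩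
  exact (hS q hq).trans (Nat.le_of_dvd hpos (Finset.dvd_prod_of_mem id hq'))

theorem erdos_construction_carmichael_general (Λ : ℕ)
    (S : Finset ℕ) (hprime : ∀ p ∈ S, p.Prime)
    (hdvd : ∀ p ∈ S, (p - 1) ∣ Λ)
    (hcard : 2 ≤ S.card)
    (hprod : (∏ p ∈ S, p) ≡ 1 [MOD Λ]) :
    2 ≤ ∏ p ∈ S, p ∧ ¬ (∏ p ∈ S, p).Prime ∧
      ∀ a : ℤ, IsCoprime a ((∏ p ∈ S, p : ℕ) : ℤ) →
        a ^ ((∏ p ∈ S, p) - 1) ≡ 1 [ZMOD ((∏ p ∈ S, p : ℕ) : ℤ)] := by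
  obtain ⟨m, n, hm, hn, hmn⟩ :=
    Finset.exists_prod_eq_mul_of_one_lt_card (fun p hp ↦ (hprime p hp).two_le) hcard
  have hΛ : Λ ∣ (∏ p ∈ S, p) - 1 := (Nat.modEq_iff_dvd' (by nlinarith)).1 hprod.symm
  refine ⟨by nlinarith, hmn ▸ Nat.not_prime_mul (by omega) (by omega), fun a ha ↦ ?_⟩
  exact Int.pow_modEq_one_of_prod_primes hprime (fun p hp ↦ (hdvd p hp).trans hΛ) ha

theorem erdos_construction_carmichael (Λ : ℕ) (hΛ : 0 < Λ)
    (S : Finset ℕ) (hprime : ∀ p ∈ S, p.Prime)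
    (hdvd : ∀ p ∈ S, (p - 1) ∣ Λ) (hndvd : ∀ p ∈ S, ¬ p ∣ Λ)
    (hcard : 2 ≤ S.card)
    (hprod : (∏ p ∈ S, p) ≡ 1 [MOD Λ]) :
    2 ≤ ∏ p ∈ S, p ∧ ¬ (∏ p ∈ S, p).Prime ∧
      ∀ a : ℤ, IsCoprime a ((∏ p ∈ S, p : ℕ) : ℤ) →
        a ^ ((∏ p ∈ S, p) - 1) ≡ 1 [ZMOD ((∏ p ∈ S, p : ℕ) : ℤ)] :=
  erdos_construction_carmichael_general Λ S hprime hdvd hcard hprod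
end

section
/- (Correctness of step 8 of Algorithm 3) Let Λ be a positive integer and let P be a finite set of prime numbers such that for every p ∈ P, (p−1) divides Λ and p does not divide Λ. Let T ⊆ P satisfy ∏_{p∈T} p ≡ ∏_{p∈P} p (mod Λ) and |P∖T| ≥ 2. Then N = ∏_{p∈P∖T} p is a Carmichael number, i.e. N is composite and a^(N−1) ≡ 1 (mod N) for every integer a coprime to N. -/
/-!
Cancelling the unit `∏ T` modulo `Λ` gives `∏ (P \ T) ≡ 1 [MOD Λ]`, so every `p - 1` with
`p ∈ P \ T` divides `N - 1`, and Korselt's criterion applies to the squarefree `N`.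
-/

open Finset

/-- The easy direction of Korselt's criterion. -/
theorem Int.ModEq.pow_prod_primes_sub_one_eq_one {S : Finset ℕ} (hS : ∀ p ∈ S, p.Prime)
    (hkorselt : ∀ p ∈ S, p - 1 ∣ ∏ q ∈ S, q - 1) {a : ℤ}
    (ha : IsCoprime a ((∏ p ∈ S, p : ℕ) : ℤ)) :
    a ^ ((∏ p ∈ S, p) - 1) ≡ 1 [ZMOD ((∏ p ∈ S, p : ℕ) : ℤ)] := by
  refine (Int.modEq_iff_dvd.mpr ?_).symm
  rw [Nat.cast_prod]
  refine Finset.prod_dvd_of_coprime (fun p hp q hq hpq => ?_) fun p hp => ?_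
  · exact Nat.isCoprime_iff_coprime.mpr ((Nat.coprime_primes (hS p hp) (hS q hq)).mpr hpq)
  · have hap : IsCoprime a p :=
      ha.of_isCoprime_of_dvd_right (Int.natCast_dvd_natCast.mpr (dvd_prod_of_mem _ hp))
    obtain ⟨k, hk⟩ := hkorselt p hp
    calc (p : ℤ) ∣ a ^ (p - 1) - 1 := Int.prime_dvd_pow_sub_one (hS p hp) hap
      _ ∣ (a ^ (p - 1)) ^ k - 1 ^ k := sub_dvd_pow_sub_pow _ _ _
      _ = a ^ ((∏ q ∈ S, q) - 1) - 1 := by rw [hk, pow_mul, one_pow]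

theorem Nat.ModEq.prod_sdiff_eq_one {ι : Type*} [DecidableEq ι] {P T : Finset ι} {f : ι → ℕ}
    {n : ℕ} (hT : T ⊆ P) (hcop : (∏ i ∈ T, f i).Coprime n)
    (h : ∏ i ∈ T, f i ≡ ∏ i ∈ P, f i [MOD n]) : ∏ i ∈ P \ T, f i ≡ 1 [MOD n] := by
  refine (Nat.ModEq.cancel_right_of_coprime hcop.symm ?_).symm
  rwa [one_mul, prod_sdiff hT]

theorem Nat.not_prime_prod_primes {S : Finset ℕ} (hS : ∀ p ∈ S, p.Prime) (hcard : 2 ≤ S.card) :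
    ¬ (∏ p ∈ S, p).Prime := by
  intro hprime
  obtain ⟨p, hp, q, hq, hpq⟩ := one_lt_card.mp hcard
  have eq_prod {r} (hr : r ∈ S) : r = ∏ p ∈ S, p :=
    ((Nat.prime_dvd_prime_iff_eq (hS r hr) hprime).mp (dvd_prod_of_mem _ hr))
  exact hpq ((eq_prod hp).trans (eq_prod hq).symm)

theorem Nat.two_le_prod_primes {S : Finset ℕ} (hS : ∀ p ∈ S, p.Prime) (hne : S.Nonempty) :
    2 ≤ ∏ p ∈ S, p := by
  obtain ⟨p, hp⟩ := hne
  exact (hS p hp).two_le.trans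
    (Nat.le_of_dvd (prod_pos fun q hq => (hS q hq).pos) (dvd_prod_of_mem _ hp))

theorem erdos_construction_carmichael_complement_general (Λ : ℕ)
    (P : Finset ℕ) (hprime : ∀ p ∈ P, p.Prime)
    (hdvd : ∀ p ∈ P, (p - 1) ∣ Λ) (hndvd : ∀ p ∈ P, ¬ p ∣ Λ)
    (T : Finset ℕ) (hT : T ⊆ P)
    (hprod : (∏ p ∈ T, p) ≡ (∏ p ∈ P, p) [MOD Λ])
    (hcard : 2 ≤ (P \ T).card) :
    2 ≤ ∏ p ∈ P \ T, p ∧ ¬ (∏ p ∈ P \ T, p).Prime ∧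
      ∀ a : ℤ, IsCoprime a ((∏ p ∈ P \ T, p : ℕ) : ℤ) →
        a ^ ((∏ p ∈ P \ T, p) - 1) ≡ 1 [ZMOD ((∏ p ∈ P \ T, p : ℕ) : ℤ)] := by
  have hprime' : ∀ p ∈ P \ T, p.Prime := fun p hp => hprime p (sdiff_subset hp)
  have hN : 2 ≤ ∏ p ∈ P \ T, p := Nat.two_le_prod_primes hprime' (card_pos.mp (by omega))
  refine ⟨hN, Nat.not_prime_prod_primes hprime' hcard, fun a ha => ?_⟩
  have hcop : (∏ p ∈ T, p).Coprime Λ := Nat.Coprime.prod_left fun p hp =>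
    (hprime p (hT hp)).coprime_iff_not_dvd.mpr (hndvd p (hT hp))
  have hΛ : Λ ∣ (∏ p ∈ P \ T, p) - 1 :=
    (Nat.modEq_iff_dvd' (by omega)).mp (Nat.ModEq.prod_sdiff_eq_one hT hcop hprod).symm
  exact Int.ModEq.pow_prod_primes_sub_one_eq_one hprime'
    (fun p hp => (hdvd p (sdiff_subset hp)).trans hΛ) ha

theorem erdos_construction_carmichael_complement (Λ : ℕ) (hΛ : 0 < Λ)
    (P : Finset ℕ) (hprime : ∀ p ∈ P, p.Prime)
    (hdvd : ∀ p ∈ P, (p - 1) ∣ Λ) (hndvd : ∀ p ∈ P, ¬ p ∣ Λ)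
    (T : Finset ℕ) (hT : T ⊆ P)
    (hprod : (∏ p ∈ T, p) ≡ (∏ p ∈ P, p) [MOD Λ])
    (hcard : 2 ≤ (P \ T).card) :
    2 ≤ ∏ p ∈ P \ T, p ∧ ¬ (∏ p ∈ P \ T, p).Prime ∧
      ∀ a : ℤ, IsCoprime a ((∏ p ∈ P \ T, p : ℕ) : ℤ) →
        a ^ ((∏ p ∈ P \ T, p) - 1) ≡ 1 [ZMOD ((∏ p ∈ P \ T, p : ℕ) : ℤ)] :=
  erdos_construction_carmichael_complement_general Λ P hprime hdvd hndvd T hT hprod hcard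
end

section
/- (Correctness of Naccache–Stern decryption) Let p be a prime, n a natural number, and p₀ < p₁ < ... < pₙ the first n+1 prime numbers, with ∏_{i=0}^{n} pᵢ < p. Let s be a positive integer coprime to p−1 and let u₀,...,uₙ ∈ (ℤ/pℤ)^× satisfy uᵢ^s = pᵢ in ℤ/pℤ. Let m < 2^{n+1} be a natural number with binary digits m₀,...,mₙ (m = Σ_{i=0}^{n} 2^i mᵢ, mᵢ ∈ {0,1}), and set c = ∏_{i=0}^{n} uᵢ^{mᵢ} in ℤ/pℤ. Then Σ_{i=0}^{n} (2^i/(pᵢ−1)) · (gcd(pᵢ, c^s mod p) − 1) = m, where c^s mod p denotes the representative of c^s in {0,1,...,p−1}. -/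
/-!
Raising `c` to the `s`-th power gives the product `N` of the primes `pᵢ` whose bit `mᵢ` is set.
Since `N ≤ ∏ pᵢ < p`, the representative of `c ^ s` is `N` itself, so `gcd(pᵢ, N)` is `pᵢ` or `1`
according to `mᵢ`, and the `i`-th summand is `2 ^ i * mᵢ`: the sum reassembles the binary
expansion of `m`.
-/

open Finset

theorem Nat.sum_two_pow_filter_testBit (m k : ℕ) :
    ∑ i ∈ (range k).filter (fun i => m.testBit i), 2 ^ i = m % 2 ^ k := by
  induction k with
  | zero => simp [Nat.mod_one]
  | succ k ih =>
    rw [range_add_one, filter_insert, Nat.mod_pow_succ, ← Nat.toNat_testBit, ← ih]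
    cases m.testBit k <;> simp [sum_insert, add_comm]

theorem Finset.prod_pow_ite_one_zero_pow {ι M : Type*} [CommMonoid M] (s : Finset ι)
    (p : ι → Prop) [DecidablePred p] (u : ι → M) (k : ℕ) :
    (∏ i ∈ s, u i ^ (if p i then 1 else 0)) ^ k = ∏ i ∈ s.filter p, u i ^ k := by
  rw [← prod_pow, prod_filter]
  refine prod_congr rfl fun i _ => ?_
  split_ifs <;> simp

theorem Nat.gcd_prod_of_injective_primes {ι : Type*} [DecidableEq ι] {q : ι → ℕ}
    (hq : ∀ j, (q j).Prime) (hinj : Function.Injective q) (t : Finset ι) (i : ι) :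
    Nat.gcd (q i) (∏ j ∈ t, q j) = if i ∈ t then q i else 1 := by
  split_ifs with hi
  · exact Nat.gcd_eq_left (dvd_prod_of_mem q hi)
  · refine Nat.Coprime.prod_right fun j hj => (Nat.coprime_primes (hq i) (hq j)).mpr
      fun hij => hi (hinj hij ▸ hj)

theorem div_sub_one_mul_ite_sub_one {K : Type*} [Field K] (a : K) {q : K} (hq : q ≠ 1)
    (P : Prop) [Decidable P] : a / (q - 1) * ((if P then q else 1) - 1) = if P then a else 0 := by
  split_ifs
  · exact div_mul_cancel₀ a (sub_ne_zero.mpr hq)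
  · simp

theorem naccache_stern_decryption_general (p : ℕ) (n : ℕ)
    (hlt : ∏ i ∈ Finset.range (n + 1), Nat.nth Nat.Prime i < p)
    (s : ℕ)
    (u : ℕ → ZMod p)
    (hu : ∀ i ∈ Finset.range (n + 1), u i ^ s = (Nat.nth Nat.Prime i : ZMod p))
    (m : ℕ) (hm : m < 2 ^ (n + 1))
    (c : ZMod p)
    (hc : c = ∏ i ∈ Finset.range (n + 1), u i ^ (if m.testBit i then 1 else 0)) :
    ∑ i ∈ Finset.range (n + 1),
        ((2 ^ i : ℚ) / ((Nat.nth Nat.Prime i : ℚ) - 1)) *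
          ((Nat.gcd (Nat.nth Nat.Prime i) ((c ^ s).val) : ℚ) - 1) = (m : ℚ) := by
  set t := (range (n + 1)).filter (fun i => m.testBit i)
  have hcs : c ^ s = ((∏ j ∈ t, Nat.nth Nat.Prime j : ℕ) : ZMod p) := by
    rw [hc, prod_pow_ite_one_zero_pow, Nat.cast_prod]
    exact prod_congr rfl fun j hj => hu j (mem_filter.mp hj).1
  have hlt_t : ∏ j ∈ t, Nat.nth Nat.Prime j < p :=
    (prod_le_prod_of_subset_of_one_le' (filter_subset _ _)
      fun j _ _ => (Nat.prime_nth_prime j).one_lt.le).trans_lt hlt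
  rw [hcs, ZMod.val_cast_of_lt hlt_t]
  calc _ = ∑ i ∈ range (n + 1), if m.testBit i then (2 ^ i : ℚ) else 0 := by
        refine sum_congr rfl fun i hi => ?_
        have hq : (Nat.nth Nat.Prime i : ℚ) ≠ 1 := by exact_mod_cast (Nat.prime_nth_prime i).ne_one
        rw [Nat.gcd_prod_of_injective_primes Nat.prime_nth_prime
          (Nat.nth_injective Nat.infinite_setOfPred_prime), Nat.cast_ite, Nat.cast_one,
          div_sub_one_mul_ite_sub_one _ hq]
        simp [t, hi]
    _ = m := by
        rw [← sum_filter]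
        exact_mod_cast (Nat.sum_two_pow_filter_testBit m (n + 1)).trans (Nat.mod_eq_of_lt hm)

theorem naccache_stern_decryption (p : ℕ) (hp : p.Prime) (n : ℕ)
    (hlt : ∏ i ∈ Finset.range (n + 1), Nat.nth Nat.Prime i < p)
    (s : ℕ) (hs : 0 < s) (hcop : Nat.Coprime s (p - 1))
    (u : ℕ → ZMod p)
    (hu : ∀ i ∈ Finset.range (n + 1), u i ^ s = (Nat.nth Nat.Prime i : ZMod p))
    (m : ℕ) (hm : m < 2 ^ (n + 1))
    (c : ZMod p)
    (hc : c = ∏ i ∈ Finset.range (n + 1), u i ^ (if m.testBit i then 1 else 0)) :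
    ∑ i ∈ Finset.range (n + 1),
        ((2 ^ i : ℚ) / ((Nat.nth Nat.Prime i : ℚ) - 1)) *
          ((Nat.gcd (Nat.nth Nat.Prime i) ((c ^ s).val) : ℚ) - 1) = (m : ℚ) :=
  naccache_stern_decryption_general p n hlt s u hu m hm c hc
end

section
/- (Lemma 3.4, Hamming weight part) Let n be a natural number and let m be a natural number with 2^n ≤ m < 2^{n+1}. Then the Hamming weight (number of ones in the binary expansion) of m' = 2^{n+1} + 2^n − m − 1 equals n + 2 − H(m), where H(m) is the Hamming weight of m. In particular, if H(m) = n + 1 − ε then H(m') = ε + 1. -/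
/-!
Write `m = r + 2ⁿ` with `r < 2ⁿ`; then `2ⁿ⁺¹ + 2ⁿ - m - 1 = (2ⁿ - 1 - r) + 2ⁿ`. Adding `2ⁿ` to a
number below `2ⁿ` appends a single leading one, and subtracting `r` from `bⁿ - 1` never borrows, so
each base-`b` digit of `bⁿ - 1 - r` is `b - 1` minus the corresponding digit of `r`. Hence the
digit sums of `r` and of its complement add up to `n (b - 1)`, which is `n` in base two.
-/

namespace Nat

variable {b : ℕ}

theorem sum_digits_of_lt {d : ℕ} (hd : d < b) : (digits b d).sum = d := by
  rcases d.eq_zero_or_pos with rfl | hd0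
  · simp
  · simp [digits_of_lt b d hd0.ne' hd]

theorem sum_digits_add_base_pow_mul (hb : 1 < b) {n r : ℕ} (hr : r < b ^ n) (k : ℕ) :
    (digits b (r + b ^ n * k)).sum = (digits b r).sum + (digits b k).sum := by
  rcases k.eq_zero_or_pos with rfl | hk
  · simp
  have hlen : (digits b r).length ≤ n := (digits_length_le_iff hb r).2 hr
  rw [← Nat.add_sub_cancel' hlen, ← digits_append_zeroes_append_digits hb hk]
  simp

theorem sum_digits_add_base_mul (hb : 1 < b) {d : ℕ} (hd : d < b) (q : ℕ) :
    (digits b (d + b * q)).sum = d + (digits b q).sum := by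
  have := sum_digits_add_base_pow_mul hb (n := 1) (by rwa [pow_one]) q
  rwa [pow_one, sum_digits_of_lt hd] at this

theorem sum_digits_add_sum_digits_complement (hb : 1 < b) :
    ∀ n r : ℕ, r < b ^ n → (digits b r).sum + (digits b (b ^ n - 1 - r)).sum = n * (b - 1)
  | 0, r, hr => by simp_all
  | n + 1, r, hr => by
    obtain ⟨d, q, hd, rfl⟩ : ∃ d q, d < b ∧ r = d + b * q :=
      ⟨r % b, r / b, Nat.mod_lt r (by omega), (Nat.mod_add_div r b).symm⟩
    have hq : q < b ^ n := by
      rw [pow_succ'] at hr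
      exact Nat.lt_of_mul_lt_mul_left (by omega : b * q < b * b ^ n)
    have hcompl : b ^ (n + 1) - 1 - (d + b * q) = (b - 1 - d) + b * (b ^ n - 1 - q) := by
      obtain ⟨s, hs⟩ := Nat.exists_eq_add_of_lt hq
      rw [pow_succ', hs, show q + s + 1 - 1 - q = s by omega, mul_add, mul_add]
      omega
    have ih := sum_digits_add_sum_digits_complement hb n q hq
    rw [hcompl, sum_digits_add_base_mul hb hd, sum_digits_add_base_mul hb (by omega)]
    calc d + (digits b q).sum + (b - 1 - d + (digits b (b ^ n - 1 - q)).sum)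
        = (b - 1) + ((digits b q).sum + (digits b (b ^ n - 1 - q)).sum) := by omega
      _ = (n + 1) * (b - 1) := by rw [ih]; ring

end Nat

theorem complement_message_hamming_weight (n m : ℕ)
    (hm₁ : 2 ^ n ≤ m) (hm₂ : m < 2 ^ (n + 1)) :
    (Nat.digits 2 (2 ^ (n + 1) + 2 ^ n - m - 1)).sum =
        n + 2 - (Nat.digits 2 m).sum ∧
      ∀ ε : ℕ, (Nat.digits 2 m).sum = n + 1 - ε → ε ≤ n →
        (Nat.digits 2 (2 ^ (n + 1) + 2 ^ n - m - 1)).sum = ε + 1 := by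
  obtain ⟨r, rfl⟩ : ∃ r, m = r + 2 ^ n * 1 := ⟨m - 2 ^ n, by omega⟩
  have hr : r < 2 ^ n := by rw [pow_succ] at hm₂; omega
  have hcompl : 2 ^ (n + 1) + 2 ^ n - (r + 2 ^ n * 1) - 1 = (2 ^ n - 1 - r) + 2 ^ n * 1 := by
    rw [pow_succ]; omega
  have hsum_m := Nat.sum_digits_add_base_pow_mul one_lt_two hr 1
  have hsum_compl := Nat.sum_digits_add_base_pow_mul one_lt_two (n := n) (r := 2 ^ n - 1 - r)
    (by omega) 1
  have hpair := Nat.sum_digits_add_sum_digits_complement one_lt_two n r hr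
  have hone : (Nat.digits 2 1).sum = 1 := by norm_num
  rw [hcompl, hsum_compl, hsum_m, hone]
  exact ⟨by omega, fun ε hε _ ↦ by omega⟩
end
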